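/- Let n ≥ 1 and let E be a Banach lattice such that the space P^r(^nE) of regular real-valued n-homogeneous polynomials on E, equipped with the regular norm ‖·‖_r, has order continuous norm. If E fails the positive Grothendieck property, then (P^r(^nE), ‖·‖_r) is a KB-space: every increasing ‖·‖_r-bounded sequence of positive regular polynomials is ‖·‖_r-convergent. -/

import Mathlib

open Filter Topology Metric

section Defs

variable {E F : Type*} [NormedAddCommGroup E] [Lattice E] [HasSolidNorm E]
  [IsOrderedAddMonoid E] [NormedSpace ℝ E]
  [NormedAddCommGroup F] [Lattice F] [HasSolidNorm F] [IsOrderedAddMonoid F] [NormedSpace ℝ F]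

/-- `P : E → F` is a continuous `n`-homogeneous polynomial: `P x = T(x,…,x)` for a
symmetric continuous `n`-linear map `T`. -/
def IsHomogPoly (n : ℕ) (P : E → F) : Prop :=
  ∃ T : ContinuousMultilinearMap ℝ (fun _ : Fin n => E) F,
    (∀ (v : Fin n → E) (σ : Equiv.Perm (Fin n)), T (v ∘ σ) = T v) ∧
    ∀ x : E, P x = T (fun _ => x)

/-- `P` is a positive `n`-homogeneous polynomial: its (symmetric) generating multilinear
map takes nonnegative values on nonnegative arguments. -/
def IsPosPoly (n : ℕ) (P : E → F) : Prop :=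
  ∃ T : ContinuousMultilinearMap ℝ (fun _ : Fin n => E) F,
    (∀ (v : Fin n → E) (σ : Equiv.Perm (Fin n)), T (v ∘ σ) = T v) ∧
    (∀ v : Fin n → E, (∀ i, 0 ≤ v i) → 0 ≤ T v) ∧
    ∀ x : E, P x = T (fun _ => x)

/-- `P` is regular: a difference of two positive `n`-homogeneous polynomials. -/
def IsRegPoly (n : ℕ) (P : E → F) : Prop :=
  ∃ P₁ P₂ : E → F, IsPosPoly n P₁ ∧ IsPosPoly n P₂ ∧ P = P₁ - P₂

/-- The sup norm `‖P‖ = sup {‖P x‖ : ‖x‖ ≤ 1}`. -/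
noncomputable def polySupNorm (P : E → F) : ℝ :=
  sSup {r : ℝ | ∃ x : E, ‖x‖ ≤ 1 ∧ r = ‖P x‖}

/-- The regular norm `‖P‖_r = inf {‖Q‖ : Q positive, Q - P and Q + P positive}`. -/
noncomputable def polyRegNorm (n : ℕ) (P : E → F) : ℝ :=
  sInf {r : ℝ | ∃ Q : E → F, IsPosPoly n Q ∧ IsPosPoly n (Q - P) ∧
    IsPosPoly n (Q + P) ∧ r = polySupNorm Q}

/-- Dedekind completeness: every nonempty subset bounded above has a least upper bound. -/
def DedekindComplete (G : Type*) [Preorder G] : Prop :=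
  ∀ S : Set G, S.Nonempty → BddAbove S → ∃ b, IsLUB S b

end Defs

/-!
Let `f k` increase with bounded regular norms. A symmetric multilinear form is determined by
its diagonal (polarization), so the symmetric generators `A k` of the `f k` increase as positive
multilinear forms. Since `|A v| ≤ A |v|` for positive `A`, the bound on the regular norms bounds
the `A k` uniformly in operator norm, and `A k v` converges for every `v`, being a difference of
two increasing bounded sequences. The limit `T` is a bounded symmetric positive form, and
`g x = T (x, …, x)` is the supremum of the `f k` among regular polynomials. Hence `g - f k`
decreases to `0` in order, and order continuity of the regular norm gives `‖f k - g‖_r → 0`.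
-/

open Finset in
theorem MultilinearMap.sum_apply_comp_perm_eq_sum_diag {R ι M N : Type*} [Semiring R] [Fintype ι]
    [DecidableEq ι] [AddCommMonoid M] [Module R M] [AddCommGroup N] [Module R N]
    (T : MultilinearMap R (fun _ : ι => M) N) (v : ι → M) :
    ∑ σ : Equiv.Perm ι, T (v ∘ σ) = ∑ B : Finset ι, (-1 : ℤ) ^ #B • T (fun _ => ∑ j ∈ Bᶜ, v j) := by
  have expand (B : Finset ι) :
      T (fun _ => ∑ j ∈ Bᶜ, v j) = ∑ r : ι → ι, if ∀ i, r i ∉ B then T (v ∘ r) else 0 := by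
    rw [← univ_inter Bᶜ, ← sum_ite_mem, T.map_sum]
    refine sum_congr rfl fun r _ => ?_
    split_ifs with h
    · congr 1; ext i; simp [h i]
    · push Not at h
      obtain ⟨i, hi⟩ := h
      exact T.map_coord_zero i (by simp [hi])
  -- inclusion-exclusion: only the surjective `r` survive the alternating sum over `B`
  have signs (r : ι → ι) : ∑ B : Finset ι, (if ∀ i, r i ∉ B then (-1 : ℤ) ^ #B else 0) =
      if Function.Surjective r then 1 else 0 := by
    have hfilter : univ.filter (fun B : Finset ι => ∀ i, r i ∉ B) = (univ.image r)ᶜ.powerset := by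
      ext B
      simp only [mem_filter, mem_univ, true_and, mem_powerset, subset_iff, mem_compl, mem_image]
      exact ⟨fun h x hx ⟨i, hi⟩ => h i (hi ▸ hx), fun h i hi => h hi ⟨i, rfl⟩⟩
    rw [← sum_filter, hfilter, sum_powerset_neg_one_pow_card]
    refine if_congr ?_ rfl rfl
    simp [eq_univ_iff_forall, Function.Surjective]
  calc ∑ σ : Equiv.Perm ι, T (v ∘ σ)
      = ∑ r : ι → ι, if Function.Surjective r then T (v ∘ r) else 0 := by
        rw [← sum_filter]
        refine sum_bij (fun σ _ => ⇑σ) (fun σ _ => by simpa using σ.surjective)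
          (fun _ _ _ _ h => Equiv.coe_fn_injective h) (fun r hr => ?_) (fun _ _ => rfl)
        have hsurj := (mem_filter.1 hr).2
        exact ⟨Equiv.ofBijective r ⟨Finite.injective_iff_surjective.2 hsurj, hsurj⟩,
          mem_univ _, rfl⟩
    _ = ∑ r : ι → ι, ∑ B : Finset ι, (if ∀ i, r i ∉ B then (-1 : ℤ) ^ #B else 0) • T (v ∘ r) := by
        refine sum_congr rfl fun r _ => ?_
        rw [← sum_smul, signs, ite_smul, one_smul, zero_smul]
    _ = _ := by
        simp only [expand, smul_sum, sum_comm (γ := Finset ι), ite_smul, smul_ite, smul_zero,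
          zero_smul]

theorem MultilinearMap.eq_zero_of_symm_of_diag_eq_zero {R ι M N : Type*} [Semiring R] [Fintype ι]
    [AddCommMonoid M] [Module R M] [AddCommGroup N] [Module R N] [IsAddTorsionFree N]
    (T : MultilinearMap R (fun _ : ι => M) N)
    (hsymm : ∀ (v : ι → M) (σ : Equiv.Perm ι), T (v ∘ σ) = T v)
    (hdiag : ∀ x, T (fun _ => x) = 0) : T = 0 := by
  classical
  ext v
  have h := T.sum_apply_comp_perm_eq_sum_diag v
  simp only [hsymm, hdiag, smul_zero, Finset.sum_const_zero, Finset.sum_const, Finset.card_univ,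
    Fintype.card_perm] at h
  exact nsmul_right_injective (Nat.factorial_ne_zero _) (h.trans (smul_zero _).symm)

namespace ContinuousMultilinearMap

variable {ι E : Type*} [NormedAddCommGroup E] [NormedSpace ℝ E]

def IsSymmetric (T : ContinuousMultilinearMap ℝ (fun _ : ι => E) ℝ) : Prop :=
  ∀ (v : ι → E) (σ : Equiv.Perm ι), T (v ∘ σ) = T v

theorem IsSymmetric.add {T U : ContinuousMultilinearMap ℝ (fun _ : ι => E) ℝ}
    (hT : T.IsSymmetric) (hU : U.IsSymmetric) : (T + U).IsSymmetric := fun v σ => by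
  simp only [add_apply, hT v σ, hU v σ]

theorem IsSymmetric.neg {T : ContinuousMultilinearMap ℝ (fun _ : ι => E) ℝ}
    (hT : T.IsSymmetric) : (-T).IsSymmetric := fun v σ => by
  simp only [neg_apply, hT v σ]

theorem IsSymmetric.sub {T U : ContinuousMultilinearMap ℝ (fun _ : ι => E) ℝ}
    (hT : T.IsSymmetric) (hU : U.IsSymmetric) : (T - U).IsSymmetric :=
  sub_eq_add_neg T U ▸ hT.add hU.neg

theorem IsSymmetric.ext_diag [Fintype ι] {T U : ContinuousMultilinearMap ℝ (fun _ : ι => E) ℝ}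
    (hT : T.IsSymmetric) (hU : U.IsSymmetric) (h : ∀ x, T (fun _ => x) = U (fun _ => x)) :
    T = U := by
  have := (T - U).toMultilinearMap.eq_zero_of_symm_of_diag_eq_zero (hT.sub hU)
    fun x => sub_eq_zero.2 (h x)
  ext v
  exact sub_eq_zero.1 congr($this v)

theorem isSymmetric_of_tendsto {A : ℕ → ContinuousMultilinearMap ℝ (fun _ : ι => E) ℝ}
    {T : ContinuousMultilinearMap ℝ (fun _ : ι => E) ℝ} (hA : ∀ k, (A k).IsSymmetric)
    (hT : ∀ v, Tendsto (fun k => A k v) atTop (𝓝 (T v))) : T.IsSymmetric := fun v σ =>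
  tendsto_nhds_unique (hT (v ∘ σ)) ((hT v).congr fun k => (hA k v σ).symm)

section Order

variable [Lattice E]

def IsPositive (T : ContinuousMultilinearMap ℝ (fun _ : ι => E) ℝ) : Prop :=
  ∀ v : ι → E, (∀ i, 0 ≤ v i) → 0 ≤ T v

theorem IsPositive.add {T U : ContinuousMultilinearMap ℝ (fun _ : ι => E) ℝ}
    (hT : T.IsPositive) (hU : U.IsPositive) : (T + U).IsPositive := fun v hv =>
  add_nonneg (hT v hv) (hU v hv)

theorem isPositive_sub_of_tendsto {A : ℕ → ContinuousMultilinearMap ℝ (fun _ : ι => E) ℝ}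
    {T : ContinuousMultilinearMap ℝ (fun _ : ι => E) ℝ}
    (hmono : ∀ k l, k ≤ l → (A l - A k).IsPositive)
    (hT : ∀ v, Tendsto (fun k => A k v) atTop (𝓝 (T v))) (k : ℕ) : (T - A k).IsPositive :=
  fun v hv => sub_nonneg.2 <| ge_of_tendsto (hT v) <|
    eventually_atTop.2 ⟨k, fun l hkl => sub_nonneg.1 (hmono k l hkl v hv)⟩

variable [Fintype ι]

theorem IsPositive.apply_le_apply_sum {T : ContinuousMultilinearMap ℝ (fun _ : ι => E) ℝ}
    (hT : T.IsPositive) {v : ι → E} (hv : ∀ i, 0 ≤ v i) : T v ≤ T (fun _ => ∑ j, v j) := by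
  classical
  rw [T.map_sum]
  exact Finset.single_le_sum (f := fun r : ι → ι => T fun i => v (r i))
    (fun r _ => hT _ fun i => hv (r i)) (Finset.mem_univ id)

variable [IsOrderedAddMonoid E]

theorem IsPositive.abs_apply_le {T : ContinuousMultilinearMap ℝ (fun _ : ι => E) ℝ}
    (hT : T.IsPositive) (v : ι → E) : |T v| ≤ T (fun i => |v i|) := by
  classical
  have hv : v = (fun i => (v i)⁺) + (fun i => -(v i)⁻) :=
    funext fun i => (posPart_sub_negPart (v i)).symm.trans (sub_eq_add_neg _ _)
  have habs : (fun i => |v i|) = (fun i => (v i)⁺) + (fun i => (v i)⁻) :=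
    funext fun i => (posPart_add_negPart (v i)).symm
  rw [habs, T.map_add_univ]
  conv_lhs => rw [hv, T.map_add_univ]
  refine (Finset.abs_sum_le_sum_abs _ _).trans (Finset.sum_le_sum fun s _ => ?_)
  -- each term differs from the corresponding term of `T |v|` only by the sign `(-1) ^ #sᶜ`
  have hsign : s.piecewise (fun i => (v i)⁺) (fun i => -(v i)⁻) =
      fun i => s.piecewise (fun _ => (1 : ℝ)) (fun _ => -1) i •
        s.piecewise (fun i => (v i)⁺) (fun i => (v i)⁻) i := by
    ext i; by_cases hi : i ∈ s <;> simp [hi]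
  have hprod : |∏ i, s.piecewise (fun _ => (1 : ℝ)) (fun _ => -1) i| = 1 := by
    rw [Finset.abs_prod]
    exact Finset.prod_eq_one fun i _ => by by_cases hi : i ∈ s <;> simp [hi]
  rw [hsign, T.map_smul_univ, smul_eq_mul, abs_mul, hprod, one_mul]
  exact (abs_of_nonneg (hT _ fun i => by
    by_cases hi : i ∈ s <;> simp [hi, posPart_nonneg, negPart_nonneg])).le

variable [HasSolidNorm E]

theorem IsPositive.norm_le_of_diag_le {T : ContinuousMultilinearMap ℝ (fun _ : ι => E) ℝ}
    (hT : T.IsPositive) {c : ℝ} (hc : 0 ≤ c)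
    (hdiag : ∀ x, 0 ≤ x → T (fun _ => x) ≤ c * ‖x‖ ^ Fintype.card ι) :
    ‖T‖ ≤ c * (2 * Fintype.card ι) ^ Fintype.card ι := by
  set N := Fintype.card ι
  refine opNorm_le_bound (by positivity) fun v => T.toMultilinearMap.bound_of_shell
    (ε := fun _ => 1) (c := fun _ => (2 : ℝ)) (fun _ => one_pos) (fun _ => by norm_num)
    (fun v hlow hup => ?_) v
  have hsum : ‖∑ j, |v j|‖ ≤ N := by
    refine (norm_sum_le _ _).trans ?_
    calc ∑ j, ‖|v j|‖ = ∑ j, ‖v j‖ := by simp only [norm_abs_eq_norm]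
      _ ≤ ∑ _j : ι, (1 : ℝ) := Finset.sum_le_sum fun j _ => (hup j).le
      _ = N := by simp [N]
  have hprod : (1 / 2 : ℝ) ^ N ≤ ∏ i, ‖v i‖ := by
    calc (1 / 2 : ℝ) ^ N = ∏ _i : ι, (1 / 2 : ℝ) := by simp [N]
      _ ≤ ∏ i, ‖v i‖ := Finset.prod_le_prod (fun _ _ => by norm_num) fun i _ => by
        simpa using hlow i
  calc ‖T.toMultilinearMap v‖ = |T v| := Real.norm_eq_abs _
    _ ≤ T (fun i => |v i|) := hT.abs_apply_le v
    _ ≤ T (fun _ => ∑ j, |v j|) := hT.apply_le_apply_sum fun i => abs_nonneg _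
    _ ≤ c * ‖∑ j, |v j|‖ ^ N := hdiag _ (Finset.sum_nonneg fun j _ => abs_nonneg _)
    _ ≤ c * N ^ N := by gcongr
    _ = c * (2 * N) ^ N * (1 / 2) ^ N := by rw [mul_assoc, ← mul_pow]; ring_nf
    _ ≤ c * (2 * N) ^ N * ∏ i, ‖v i‖ := by gcongr

theorem exists_tendsto_of_isPositive_sub {A : ℕ → ContinuousMultilinearMap ℝ (fun _ : ι => E) ℝ}
    {M : ℝ} (hmono : ∀ k l, k ≤ l → (A l - A k).IsPositive) (hbound : ∀ k, ‖A k‖ ≤ M) :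
    ∃ T : ContinuousMultilinearMap ℝ (fun _ : ι => E) ℝ,
      ∀ v, Tendsto (fun k => A k v) atTop (𝓝 (T v)) := by
  have hle (k : ℕ) (v : ι → E) : |A k v| ≤ M * ∏ i, ‖v i‖ :=
    ((A k).le_opNorm v).trans (by gcongr; exact hbound k)
  have conv (v : ι → E) : ∃ L, Tendsto (fun k => A k v) atTop (𝓝 L) := by
    set w : ι → E := fun i => |v i|
    have hw : ∏ i, ‖w i‖ = ∏ i, ‖v i‖ := by simp only [w, norm_abs_eq_norm]
    -- `A k v` is the difference of the increasing bounded sequences `A k v + A k w` and `A k w`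
    have hb : Monotone fun k => A k w := fun k l hkl =>
      sub_nonneg.1 (hmono k l hkl w fun i => abs_nonneg _)
    have hab : Monotone fun k => A k v + A k w := fun k l hkl => by
      have h := (abs_le.1 ((hmono k l hkl).abs_apply_le v)).1
      simp only [sub_apply] at h
      linarith
    have hb_bdd : BddAbove (Set.range fun k => A k w) :=
      ⟨M * ∏ i, ‖v i‖, by rintro _ ⟨k, rfl⟩; exact (le_abs_self _).trans (hw ▸ hle k w)⟩
    have hab_bdd : BddAbove (Set.range fun k => A k v + A k w) :=
      ⟨2 * (M * ∏ i, ‖v i‖), by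
        rintro _ ⟨k, rfl⟩
        linarith [le_abs_self (A k v), le_abs_self (A k w), hle k v, hw ▸ hle k w]⟩
    exact ⟨_, ((tendsto_atTop_ciSup hab hab_bdd).sub (tendsto_atTop_ciSup hb hb_bdd)).congr
      fun k => add_sub_cancel_right _ _⟩
  choose t ht using conv
  let t' : MultilinearMap ℝ (fun _ : ι => E) ℝ :=
    { toFun := t
      map_update_add' := fun v i x y => tendsto_nhds_unique (ht _) <| by
        simpa only [map_update_add] using
          (ht (Function.update v i x)).add (ht (Function.update v i y))
      map_update_smul' := fun v i c x => tendsto_nhds_unique (ht _) <| by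
        simpa only [map_update_smul, smul_eq_mul] using (ht (Function.update v i x)).const_mul c }
  refine ⟨t'.mkContinuous M fun v => le_of_tendsto (ht v).norm (Eventually.of_forall fun k => ?_),
    ht⟩
  exact (Real.norm_eq_abs _).trans_le (hle k v)

end Order

end ContinuousMultilinearMap

section Polynomials

open ContinuousMultilinearMap

variable {E F : Type*} [NormedAddCommGroup E] [NormedAddCommGroup F] {n : ℕ}

theorem polySupNorm_nonneg (P : E → F) : 0 ≤ polySupNorm P :=
  Real.sSup_nonneg (by rintro _ ⟨x, -, rfl⟩; exact norm_nonneg _)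

variable [NormedSpace ℝ E] [NormedSpace ℝ F]

theorem IsHomogPoly.map_smul {P : E → F} (hP : IsHomogPoly n P) (c : ℝ) (x : E) :
    P (c • x) = c ^ n • P x := by
  obtain ⟨T, -, hdiag⟩ := hP
  simpa [hdiag] using T.map_smul_univ (fun _ => c) (fun _ => x)

theorem IsHomogPoly.norm_apply_le {P : E → F} (hP : IsHomogPoly n P) (x : E) :
    ‖P x‖ ≤ polySupNorm P * ‖x‖ ^ n := by
  have hbdd : BddAbove {r : ℝ | ∃ y : E, ‖y‖ ≤ 1 ∧ r = ‖P y‖} := by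
    obtain ⟨T, -, hdiag⟩ := hP
    refine ⟨‖T‖, ?_⟩
    rintro _ ⟨y, hy, rfl⟩
    simpa [hdiag] using T.le_opNorm_mul_pow_card_of_le (m := fun _ => y) (b := 1)
      ((pi_norm_le_iff_of_nonneg zero_le_one).2 fun _ => hy)
  set u := ‖x‖⁻¹ • x
  have hu : ‖u‖ ≤ 1 := by
    rw [norm_smul, norm_inv, norm_norm]
    exact inv_mul_le_one_of_le₀ le_rfl (norm_nonneg x)
  have hx : ‖x‖ • u = x := by
    rcases eq_or_ne x 0 with rfl | h
    · simp
    · exact smul_inv_smul₀ (norm_ne_zero_iff.2 h) x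
  calc ‖P x‖ = ‖x‖ ^ n * ‖P u‖ := by
        conv_lhs => rw [← hx, hP.map_smul, norm_smul, norm_pow, norm_norm]
    _ ≤ ‖x‖ ^ n * polySupNorm P := by gcongr; exact le_csSup hbdd ⟨u, hu, rfl⟩
    _ = polySupNorm P * ‖x‖ ^ n := mul_comm _ _

variable [Lattice E] [Lattice F]

theorem IsPosPoly.isHomogPoly {P : E → F} (hP : IsPosPoly n P) : IsHomogPoly n P :=
  let ⟨T, hsymm, _, hdiag⟩ := hP
  ⟨T, hsymm, hdiag⟩

theorem isPosPoly_zero : IsPosPoly n (0 : E → ℝ) :=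
  ⟨0, fun _ _ => rfl, fun _ _ => le_rfl, fun _ => rfl⟩

theorem IsPosPoly.add {P Q : E → ℝ} (hP : IsPosPoly n P) (hQ : IsPosPoly n Q) :
    IsPosPoly n (P + Q) :=
  let ⟨T, hTs, hTp, hTd⟩ := hP
  let ⟨U, hUs, hUp, hUd⟩ := hQ
  ⟨T + U, IsSymmetric.add hTs hUs, IsPositive.add hTp hUp, fun x => by simp [hTd, hUd]⟩

theorem IsPosPoly.isRegPoly {P : E → ℝ} (hP : IsPosPoly n P) : IsRegPoly n P :=
  ⟨P, 0, hP, isPosPoly_zero, (sub_zero P).symm⟩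

theorem IsPosPoly.apply_nonneg {P : E → ℝ} (hP : IsPosPoly n P) {x : E} (hx : 0 ≤ x) :
    0 ≤ P x :=
  let ⟨_, _, hpos, hdiag⟩ := hP
  hdiag x ▸ hpos _ fun _ => hx

theorem isPosPoly_sub_of_le {f : ℕ → E → ℝ} (hf : ∀ k, IsPosPoly n (f (k + 1) - f k))
    {k l : ℕ} (hkl : k ≤ l) : IsPosPoly n (f l - f k) := by
  induction l, hkl using Nat.le_induction with
  | base => simpa using isPosPoly_zero
  | succ l _ ih => simpa using (hf l).add ih

theorem isPosPoly_iff_isPositive {T : ContinuousMultilinearMap ℝ (fun _ : Fin n => E) ℝ}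
    (hT : T.IsSymmetric) {P : E → ℝ} (hP : ∀ x, P x = T fun _ => x) :
    IsPosPoly n P ↔ T.IsPositive := by
  refine ⟨fun ⟨U, hU, hpos, hdiag⟩ => ?_, fun hpos => ⟨T, hT, hpos, hP⟩⟩
  rwa [hT.ext_diag hU fun x => (hP x).symm.trans (hdiag x)]

theorem IsRegPoly.exists_isSymmetric {P : E → ℝ} (hP : IsRegPoly n P) :
    ∃ T : ContinuousMultilinearMap ℝ (fun _ : Fin n => E) ℝ,
      T.IsSymmetric ∧ ∀ x, P x = T fun _ => x := by
  obtain ⟨P₁, P₂, ⟨T₁, h₁, -, hd₁⟩, ⟨T₂, h₂, -, hd₂⟩, rfl⟩ := hP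
  exact ⟨T₁ - T₂, IsSymmetric.sub h₁ h₂, fun x => by simp [hd₁, hd₂]⟩

theorem polyRegNorm_nonneg (P : E → ℝ) : 0 ≤ polyRegNorm n P :=
  Real.sInf_nonneg (by rintro _ ⟨Q, -, -, -, rfl⟩; exact polySupNorm_nonneg Q)

theorem polyRegNorm_neg (P : E → ℝ) : polyRegNorm n (-P) = polyRegNorm n P := by
  simp only [polyRegNorm, sub_neg_eq_add, ← sub_eq_add_neg, and_left_comm]

theorem polyRegNorm_mono {P Q : E → ℝ} (hP : IsPosPoly n P) (hPQ : IsPosPoly n (Q - P)) :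
    polyRegNorm n P ≤ polyRegNorm n Q := by
  have hQ : IsPosPoly n Q := sub_add_cancel Q P ▸ hPQ.add hP
  unfold polyRegNorm
  refine csInf_le_csInf ⟨0, by rintro _ ⟨Q', -, -, -, rfl⟩; exact polySupNorm_nonneg Q'⟩
    ⟨_, Q, hQ, (sub_self Q).symm ▸ isPosPoly_zero, hQ.add hQ, rfl⟩ ?_
  rintro _ ⟨Q', hQ', hQ'Q, -, rfl⟩
  exact ⟨Q', hQ', sub_add_sub_cancel Q' Q P ▸ hQ'Q.add hPQ, hQ'.add hP, rfl⟩

theorem IsPosPoly.apply_le_of_polyRegNorm_lt {P : E → ℝ} (hP : IsPosPoly n P) {c : ℝ}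
    (hc : polyRegNorm n P < c) {x : E} (hx : 0 ≤ x) : P x ≤ c * ‖x‖ ^ n := by
  unfold polyRegNorm at hc
  obtain ⟨_, ⟨Q, hQ, hQP, -, rfl⟩, hlt⟩ := exists_lt_of_csInf_lt
    (by exact ⟨_, P, hP, (sub_self P).symm ▸ isPosPoly_zero, hP.add hP, rfl⟩) hc
  calc P x ≤ Q x := sub_nonneg.1 (hQP.apply_nonneg hx)
    _ ≤ ‖Q x‖ := Real.le_norm_self _
    _ ≤ polySupNorm Q * ‖x‖ ^ n := hQ.isHomogPoly.norm_apply_le x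
    _ ≤ c * ‖x‖ ^ n := by gcongr

end Polynomials

section KB

open ContinuousMultilinearMap

variable {E : Type*} [NormedAddCommGroup E] [Lattice E] [NormedSpace ℝ E] {n : ℕ}

variable (E n) in
def RegNormOrderContinuous : Prop :=
  ∀ S : Set (E → ℝ), (∀ P ∈ S, IsRegPoly n P) → S.Nonempty →
    DirectedOn (fun P R : E → ℝ => IsPosPoly n (P - R)) S →
    (∀ P ∈ S, IsPosPoly n P) →
    (∀ R : E → ℝ, IsRegPoly n R → (∀ P ∈ S, IsPosPoly n (P - R)) → IsPosPoly n (-R)) →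
    sInf ((fun P : E → ℝ => polyRegNorm n P) '' S) = 0

theorem RegNormOrderContinuous.tendsto_polyRegNorm (hOC : RegNormOrderContinuous E n)
    {h : ℕ → E → ℝ} (hpos : ∀ k, IsPosPoly n (h k))
    (hanti : ∀ k l, k ≤ l → IsPosPoly n (h k - h l))
    (hinf : ∀ R, IsRegPoly n R → (∀ k, IsPosPoly n (h k - R)) → IsPosPoly n (-R)) :
    Tendsto (fun k => polyRegNorm n (h k)) atTop (𝓝 0) := by
  have hS := hOC (Set.range h) (by rintro _ ⟨k, rfl⟩; exact (hpos k).isRegPoly)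
    (Set.range_nonempty h)
    (by
      rintro _ ⟨j, rfl⟩ _ ⟨k, rfl⟩
      exact ⟨h (max j k), ⟨_, rfl⟩, hanti _ _ (le_max_left j k), hanti _ _ (le_max_right j k)⟩)
    (by rintro _ ⟨k, rfl⟩; exact hpos k)
    (fun R hR hlow => hinf R hR fun k => hlow _ ⟨k, rfl⟩)
  rw [← Set.range_comp] at hS
  have hmono : Antitone fun k => polyRegNorm n (h k) := antitone_nat_of_succ_le fun k =>
    polyRegNorm_mono (hpos (k + 1)) (hanti k (k + 1) k.le_succ)
  exact hS ▸ tendsto_atTop_ciInf hmono ⟨0, by rintro _ ⟨k, rfl⟩; exact polyRegNorm_nonneg _⟩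

variable [HasSolidNorm E] [IsOrderedAddMonoid E]

theorem exists_isPosPoly_sup_of_monotone {f : ℕ → E → ℝ} {C : ℝ}
    (hf : ∀ k, IsPosPoly n (f k)) (hmono : ∀ k, IsPosPoly n (f (k + 1) - f k))
    (hC : ∀ k, polyRegNorm n (f k) ≤ C) :
    ∃ g, IsPosPoly n g ∧ (∀ k, IsPosPoly n (g - f k)) ∧
      ∀ R, IsRegPoly n R → (∀ k, IsPosPoly n (g - f k - R)) → IsPosPoly n (-R) := by
  choose A hAsymm hApos hAf using id hf
  have hAmono (k l : ℕ) (hkl : k ≤ l) : (A l - A k).IsPositive :=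
    (isPosPoly_iff_isPositive (IsSymmetric.sub (hAsymm l) (hAsymm k)) fun x => by simp [hAf]).1
      (isPosPoly_sub_of_le hmono hkl)
  have hC0 : 0 ≤ C + 1 := by linarith [polyRegNorm_nonneg (n := n) (f 0), hC 0]
  have hAbound (k : ℕ) : ‖A k‖ ≤ (C + 1) * (2 * n) ^ n := by
    simpa using IsPositive.norm_le_of_diag_le (hApos k) hC0 fun x hx => by
      simpa [hAf] using (hf k).apply_le_of_polyRegNorm_lt ((hC k).trans_lt (lt_add_one C)) hx
  obtain ⟨T, hT⟩ := exists_tendsto_of_isPositive_sub hAmono hAbound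
  have hTsymm := isSymmetric_of_tendsto hAsymm hT
  have hTA := isPositive_sub_of_tendsto hAmono hT
  refine ⟨fun x => T fun _ => x,
    ⟨T, hTsymm, sub_add_cancel T (A 0) ▸ (hTA 0).add (hApos 0), fun _ => rfl⟩,
    fun k => ⟨T - A k, IsSymmetric.sub hTsymm (hAsymm k), hTA k, fun x => by simp [hAf]⟩,
    fun R hR hlow => ?_⟩
  obtain ⟨U, hU, hRU⟩ := hR.exists_isSymmetric
  refine (isPosPoly_iff_isPositive hU.neg fun x => by simp [hRU]).2 fun v hv => ?_
  have hle (k : ℕ) : U v ≤ T v - A k v := by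
    have := (isPosPoly_iff_isPositive ((IsSymmetric.sub hTsymm (hAsymm k)).sub hU)
      fun x => by simp [hAf, hRU]).1 (hlow k) v hv
    simp only [sub_apply] at this
    linarith
  have hlim : Tendsto (fun k => T v - A k v) atTop (𝓝 0) := by
    simpa using (hT v).const_sub (T v)
  simpa using ge_of_tendsto' hlim hle

end KB

theorem statement17_general
    {E : Type*} [NormedAddCommGroup E] [Lattice E] [HasSolidNorm E] [IsOrderedAddMonoid E]
    [NormedSpace ℝ E]
    (n : ℕ)
    -- P^r(^nE) has order continuous (regular) norm
    (hOC : ∀ S : Set (E → ℝ), (∀ P ∈ S, IsRegPoly n P) → S.Nonempty →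
      DirectedOn (fun P R : E → ℝ => IsPosPoly n (P - R)) S →
      (∀ P ∈ S, IsPosPoly n P) →
      (∀ R : E → ℝ, IsRegPoly n R → (∀ P ∈ S, IsPosPoly n (P - R)) → IsPosPoly n (-R)) →
      sInf ((fun P : E → ℝ => polyRegNorm n P) '' S) = 0) :
    -- (P^r(^nE), ‖·‖_r) is a KB-space
    ∀ f : ℕ → (E → ℝ), (∀ k, IsPosPoly n (f k)) →
      (∀ k, IsPosPoly n (f (k + 1) - f k)) →
      (∃ C : ℝ, ∀ k, polyRegNorm n (f k) ≤ C) →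
      ∃ g : E → ℝ, IsRegPoly n g ∧
        Tendsto (fun k => polyRegNorm n (f k - g)) atTop (nhds 0) := by
  rintro f hf hmono ⟨C, hC⟩
  obtain ⟨g, hg, hgf, hsup⟩ := exists_isPosPoly_sup_of_monotone hf hmono hC
  refine ⟨g, hg.isRegPoly, ?_⟩
  have hanti (k l : ℕ) (hkl : k ≤ l) : IsPosPoly n ((g - f k) - (g - f l)) :=
    sub_sub_sub_cancel_left (f k) (f l) g ▸ isPosPoly_sub_of_le hmono hkl
  simpa only [← neg_sub g, polyRegNorm_neg] using
    RegNormOrderContinuous.tendsto_polyRegNorm hOC hgf hanti hsup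

theorem statement17
    {E : Type*} [NormedAddCommGroup E] [Lattice E] [HasSolidNorm E] [IsOrderedAddMonoid E]
    [NormedSpace ℝ E] [CompleteSpace E]
    (n : ℕ) (hn : 1 ≤ n)
    -- P^r(^nE) has order continuous (regular) norm
    (hOC : ∀ S : Set (E → ℝ), (∀ P ∈ S, IsRegPoly n P) → S.Nonempty →
      DirectedOn (fun P R : E → ℝ => IsPosPoly n (P - R)) S →
      (∀ P ∈ S, IsPosPoly n P) →
      (∀ R : E → ℝ, IsRegPoly n R → (∀ P ∈ S, IsPosPoly n (P - R)) → IsPosPoly n (-R)) →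
      sInf ((fun P : E → ℝ => polyRegNorm n P) '' S) = 0)
    -- E fails the positive Grothendieck property
    (hE : ∃ f : ℕ → (E →L[ℝ] ℝ), (∀ k, ∀ x : E, 0 ≤ x → 0 ≤ f k x) ∧
      (∀ x : E, Tendsto (fun k => f k x) atTop (nhds 0)) ∧
      ∃ φ : (E →L[ℝ] ℝ) →L[ℝ] ℝ, ¬ Tendsto (fun k => φ (f k)) atTop (nhds 0)) :
    -- (P^r(^nE), ‖·‖_r) is a KB-space
    ∀ f : ℕ → (E → ℝ), (∀ k, IsPosPoly n (f k)) →
      (∀ k, IsPosPoly n (f (k + 1) - f k)) →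
      (∃ C : ℝ, ∀ k, polyRegNorm n (f k) ≤ C) →
      ∃ g : E → ℝ, IsRegPoly n g ∧
        Tendsto (fun k => polyRegNorm n (f k - g)) atTop (nhds 0) :=
  statement17_general n hOC
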